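/- arXiv:2103.00228 — 4 statements merged into one kernel-verified Lean document; each statement's English description precedes it below -/
import Mathlib

section
/- Let Γ be a Deza graph with parameters (n,k,b,a) with b > a. Then for every vertex x, the number of vertices having exactly b common neighbours with x equals β = (k(k-1) - a(n-1))/(b-a), and the number of vertices having exactly a common neighbours with x equals α = (b(n-1) - k(k-1))/(b-a); in particular these quantities do not depend on the choice of x. -/
open SimpleGraph

/-- Number of common neighbours of `u` and `v` in `G`. -/
noncomputable def cc {V : Type*} (G : SimpleGraph V) (u v : V) : ℕ :=
  Nat.card (G.commonNeighbors u v)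

/-- `G` is regular of valency `k`. -/
def IsRegularNat {V : Type*} (G : SimpleGraph V) (k : ℕ) : Prop :=
  ∀ v : V, Nat.card (G.neighborSet v) = k

/-- `G` is a Deza graph with parameters `(n, k, b, a)`. -/
def IsDeza {V : Type*} (G : SimpleGraph V) (n k b a : ℕ) : Prop :=
  a ≤ b ∧ b ≤ k ∧ k < n ∧ Nat.card V = n ∧ IsRegularNat G k ∧
  (∀ u v : V, u ≠ v → cc G u v = a ∨ cc G u v = b) ∧
  (∃ u v : V, u ≠ v ∧ cc G u v = a) ∧
  (∃ u v : V, u ≠ v ∧ cc G u v = b)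

/-! Counting the paths `x – z – y` with `y ≠ x` through the `k` neighbours `z` of `x` gives
`∑_{y ≠ x} |N(x) ∩ N(y)| = k(k-1)`. Every `y ≠ x` contributes `a` or `b`, so the numbers `α`, `β`
of `a`- and `b`-vertices satisfy `α + β = n - 1` and `aα + bβ = k(k-1)`, a linear system with
determinant `b - a ≠ 0`. -/

open Finset

namespace SimpleGraph

variable {V : Type*} [Fintype V] (G : SimpleGraph V) [DecidableRel G.Adj]

theorem cc_eq_card_neighborFinset_inter [DecidableEq V] (u v : V) :
    cc G u v = #(G.neighborFinset u ∩ G.neighborFinset v) := by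
  simp only [cc, Nat.card_coe_set_eq, commonNeighbors_eq, ← coe_neighborFinset, ← coe_inter,
    Set.ncard_coe_finset]

theorem sum_card_neighborFinset_inter [DecidableEq V] (x : V) :
    ∑ y, #(G.neighborFinset x ∩ G.neighborFinset y) = ∑ z ∈ G.neighborFinset x, G.degree z := by
  calc ∑ y, #(G.neighborFinset x ∩ G.neighborFinset y)
      = ∑ y, ∑ z ∈ G.neighborFinset x, if G.Adj y z then 1 else 0 := by
        refine sum_congr rfl fun y _ => ?_
        rw [← filter_mem_eq_inter, card_filter]
        simp only [mem_neighborFinset]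
    _ = ∑ z ∈ G.neighborFinset x, ∑ y, if G.Adj y z then 1 else 0 := sum_comm
    _ = ∑ z ∈ G.neighborFinset x, G.degree z := by
        refine sum_congr rfl fun z _ => ?_
        rw [← card_filter, ← card_neighborFinset_eq_degree]
        congr 1
        ext y
        simp [adj_comm]

variable {G}

theorem IsRegularNat.isRegularOfDegree {k : ℕ} (h : IsRegularNat G k) : G.IsRegularOfDegree k :=
  fun v => by rw [← card_neighborSet_eq_degree, ← Nat.card_eq_fintype_card, h v]

theorem IsRegularOfDegree.sum_card_neighborFinset_inter_erase [DecidableEq V] {k : ℕ}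
    (hG : G.IsRegularOfDegree k) (x : V) :
    ∑ y ∈ univ.erase x, #(G.neighborFinset x ∩ G.neighborFinset y) = k * (k - 1) := by
  have htotal := G.sum_card_neighborFinset_inter x
  rw [← add_sum_erase _ _ (mem_univ x), inter_self, card_neighborFinset_eq_degree,
    sum_congr rfl fun z _ => hG z, sum_const, card_neighborFinset_eq_degree, hG x,
    smul_eq_mul] at htotal
  rw [Nat.mul_sub_one]
  omega

end SimpleGraph

theorem Finset.card_filter_eq_of_two_valued {ι : Type*} {s : Finset ι} {f : ι → ℕ} {a b : ℕ}
    (hab : a < b) (hf : ∀ i ∈ s, f i = a ∨ f i = b) :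
    (#{i ∈ s | f i = b} : ℚ) = ((∑ i ∈ s, f i : ℕ) - a * #s) / (b - a) ∧
      (#{i ∈ s | f i = a} : ℚ) = (b * #s - (∑ i ∈ s, f i : ℕ)) / (b - a) := by
  have hne : {i ∈ s | ¬f i = a} = {i ∈ s | f i = b} :=
    filter_congr fun i hi => by rcases hf i hi with h | h <;> simp [h, hab.ne, hab.ne']
  have hcard : #{i ∈ s | f i = a} + #{i ∈ s | f i = b} = #s := by
    rw [← hne, card_filter_add_card_filter_not]
  have hsum : ∑ i ∈ s, f i = a * #{i ∈ s | f i = a} + b * #{i ∈ s | f i = b} := by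
    rw [← sum_filter_add_sum_filter_not s (f · = a), hne,
      sum_const_nat fun i hi => (mem_filter.1 hi).2, sum_const_nat fun i hi => (mem_filter.1 hi).2,
      mul_comm a, mul_comm b]
  have hcardℚ : (#{i ∈ s | f i = a} : ℚ) + #{i ∈ s | f i = b} = #s := by exact_mod_cast hcard
  have hsumℚ : ((∑ i ∈ s, f i : ℕ) : ℚ) = a * #{i ∈ s | f i = a} + b * #{i ∈ s | f i = b} := by
    exact_mod_cast hsum
  have hba : (b : ℚ) - a ≠ 0 := sub_ne_zero.2 (by exact_mod_cast hab.ne')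
  constructor
  · rw [eq_div_iff hba]
    linear_combination -hsumℚ - (a : ℚ) * hcardℚ
  · rw [eq_div_iff hba]
    linear_combination hsumℚ + (b : ℚ) * hcardℚ

theorem Nat.card_setOf_ne_and {V : Type*} [Fintype V] [DecidableEq V] (x : V) (P : V → Prop)
    [DecidablePred P] : Nat.card {y : V | y ≠ x ∧ P y} = #{y ∈ univ.erase x | P y} := by
  rw [Nat.card_coe_set_eq, Set.ncard_eq_toFinset_card']
  congr 1
  ext y
  simp

theorem deza_alpha_beta_general {V : Type*} (G : SimpleGraph V) (n k b a : ℕ)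
    (h : IsDeza G n k b a) (hab : a < b) (x : V) :
    (Nat.card {y : V | y ≠ x ∧ cc G x y = b} : ℚ) =
      ((k : ℚ) * ((k : ℚ) - 1) - (a : ℚ) * ((n : ℚ) - 1)) / ((b : ℚ) - (a : ℚ)) ∧
    (Nat.card {y : V | y ≠ x ∧ cc G x y = a} : ℚ) =
      ((b : ℚ) * ((n : ℚ) - 1) - (k : ℚ) * ((k : ℚ) - 1)) / ((b : ℚ) - (a : ℚ)) := by
  classical
  obtain ⟨-, hbk, hkn, hcard, hreg, htwo, -, -⟩ := h
  have : Finite V := Nat.finite_of_card_ne_zero (by omega)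
  cases nonempty_fintype V
  have hsum : ∑ y ∈ univ.erase x, cc G x y = k * (k - 1) := by
    simp only [G.cc_eq_card_neighborFinset_inter]
    exact hreg.isRegularOfDegree.sum_card_neighborFinset_inter_erase x
  have hsize : #(univ.erase x) = n - 1 := by
    rw [card_erase_of_mem (mem_univ x), card_univ, ← Nat.card_eq_fintype_card, hcard]
  obtain ⟨hβ, hα⟩ := card_filter_eq_of_two_valued (s := univ.erase x) (f := cc G x) hab
    fun y hy => htwo x y (ne_of_mem_erase hy).symm
  rw [Nat.card_setOf_ne_and, Nat.card_setOf_ne_and, hβ, hα, hsum, hsize, Nat.cast_mul,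
    Nat.cast_pred (by omega), Nat.cast_pred (by omega)]
  exact ⟨rfl, rfl⟩

/-- In a Deza graph with parameters `(n,k,b,a)`, `b > a`, for every
vertex `x` the numbers of `b`-vertices and `a`-vertices for `x` are
`β = (k(k-1) - a(n-1))/(b-a)` and `α = (b(n-1) - k(k-1))/(b-a)` respectively. -/
theorem deza_alpha_beta {V : Type*} [Fintype V] (G : SimpleGraph V) (n k b a : ℕ)
    (h : IsDeza G n k b a) (hab : a < b) (x : V) :
    (Nat.card {y : V | y ≠ x ∧ cc G x y = b} : ℚ) =
      ((k : ℚ) * ((k : ℚ) - 1) - (a : ℚ) * ((n : ℚ) - 1)) / ((b : ℚ) - (a : ℚ)) ∧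
    (Nat.card {y : V | y ≠ x ∧ cc G x y = a} : ℚ) =
      ((b : ℚ) * ((n : ℚ) - 1) - (k : ℚ) * ((k : ℚ) - 1)) / ((b : ℚ) - (a : ℚ)) :=
  deza_alpha_beta_general G n k b a h hab x
end

section
/- Let Δ be a Deza graph with parameters (n,k,b,a) that is not strongly regular. Then the complement of Δ is a Deza graph if and only if b = a + 2 and at least one of the following two situations fails to occur: (1) there exist two non-adjacent vertices with a common neighbours; (4) there exist two adjacent vertices with b common neighbours. -/
open SimpleGraph

/-- `G` is strongly regular with parameters `(n, k, l, m)`. -/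
def IsSRGNat {V : Type*} (G : SimpleGraph V) (n k l m : ℕ) : Prop :=
  Nat.card V = n ∧ IsRegularNat G k ∧
  (∀ u v : V, G.Adj u v → cc G u v = l) ∧
  (∀ u v : V, u ≠ v → ¬ G.Adj u v → cc G u v = m)

section Aux

variable {V : Type*} [Fintype V]

omit [Fintype V] in
lemma cc_eq (G : SimpleGraph V) (u v : V) : cc G u v = (G.commonNeighbors u v).ncard :=
  Nat.card_coe_set_eq _

omit [Fintype V] in
lemma compl_commonNeighbors (G : SimpleGraph V) (u v : V) :
    Gᶜ.commonNeighbors u v = (G.neighborSet u ∪ G.neighborSet v ∪ {u, v})ᶜ := by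
  ext w
  simp only [commonNeighbors, Set.mem_inter_iff, mem_neighborSet, compl_adj,
    Set.mem_compl_iff, Set.mem_union, Set.mem_insert_iff, Set.mem_singleton_iff]
  constructor
  · rintro ⟨⟨h1, h2⟩, h3, h4⟩
    push_neg
    exact ⟨⟨h2, h4⟩, fun hw => h1 hw.symm, fun hw => h3 hw.symm⟩
  · intro hw
    push_neg at hw
    exact ⟨⟨fun e => hw.2.1 e.symm, hw.1.1⟩, fun e => hw.2.2 e.symm, hw.1.2⟩

lemma key_adj (G : SimpleGraph V) {u v : V} (h : G.Adj u v) :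
    cc Gᶜ u v + ((G.neighborSet u).ncard + (G.neighborSet v).ncard) =
      Nat.card V + cc G u v := by
  have hsub : ({u, v} : Set V) ⊆ G.neighborSet u ∪ G.neighborSet v := by
    rintro w (rfl | rfl)
    · exact Or.inr h.symm
    · exact Or.inl h
  have he : G.neighborSet u ∪ G.neighborSet v ∪ {u, v} =
      G.neighborSet u ∪ G.neighborSet v := Set.union_eq_self_of_subset_right hsub
  have h1 := Set.ncard_add_ncard_compl (G.neighborSet u ∪ G.neighborSet v)
  have h2 := Set.ncard_union_add_ncard_inter (G.neighborSet u) (G.neighborSet v)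
  rw [cc_eq, compl_commonNeighbors, he, cc_eq]
  have h3 : G.commonNeighbors u v = G.neighborSet u ∩ G.neighborSet v := rfl
  rw [h3]
  omega

lemma key_nonadj (G : SimpleGraph V) {u v : V} (huv : u ≠ v) (h : ¬ G.Adj u v) :
    cc Gᶜ u v + ((G.neighborSet u).ncard + (G.neighborSet v).ncard) + 2 =
      Nat.card V + cc G u v := by
  have hdisj : Disjoint (G.neighborSet u ∪ G.neighborSet v) ({u, v} : Set V) := by
    rw [Set.disjoint_right]
    rintro w (rfl | rfl) hw
    · rcases hw with hw | hw
      · exact G.irrefl hw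
      · exact h hw.symm
    · rcases hw with hw | hw
      · exact h hw
      · exact G.irrefl hw
  have he : (G.neighborSet u ∪ G.neighborSet v ∪ {u, v}).ncard =
      (G.neighborSet u ∪ G.neighborSet v).ncard + 2 := by
    rw [Set.ncard_union_eq hdisj]
    congr 1
    rw [Set.ncard_pair huv]
  have h1 := Set.ncard_add_ncard_compl (G.neighborSet u ∪ G.neighborSet v ∪ {u, v})
  have h2 := Set.ncard_union_add_ncard_inter (G.neighborSet u) (G.neighborSet v)
  rw [cc_eq, compl_commonNeighbors, cc_eq]
  have h3 : G.commonNeighbors u v = G.neighborSet u ∩ G.neighborSet v := rfl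
  rw [h3]
  omega

lemma cc_le_deg (G : SimpleGraph V) (u v : V) :
    cc G u v ≤ Nat.card (G.neighborSet u) := by
  rw [cc_eq, Nat.card_coe_set_eq]
  exact Set.ncard_le_ncard Set.inter_subset_left (Set.toFinite _)

lemma compl_deg (G : SimpleGraph V) (v : V) :
    Nat.card (Gᶜ.neighborSet v) + ((G.neighborSet v).ncard + 1) = Nat.card V := by
  have hset : Gᶜ.neighborSet v = (G.neighborSet v ∪ {v})ᶜ := by
    ext w
    simp only [mem_neighborSet, compl_adj, Set.mem_compl_iff, Set.mem_union,
      Set.mem_singleton_iff]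
    constructor
    · rintro ⟨h1, h2⟩
      push_neg
      exact ⟨h2, fun e => h1 e.symm⟩
    · intro hw
      push_neg at hw
      exact ⟨fun e => hw.2 e.symm, hw.1⟩
  have hdisj : Disjoint (G.neighborSet v) ({v} : Set V) := by
    rw [Set.disjoint_right]
    rintro w rfl hw
    exact G.irrefl hw
  have h1 := Set.ncard_add_ncard_compl (G.neighborSet v ∪ {v})
  have h2 : (G.neighborSet v ∪ {v}).ncard = (G.neighborSet v).ncard + 1 := by
    rw [Set.ncard_union_eq hdisj, Set.ncard_singleton]
  rw [Nat.card_coe_set_eq, hset]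
  omega

end Aux

/-- For a Deza graph `Δ` with parameters `(n,k,b,a)` that is not strongly
regular, the complement of `Δ` is a Deza graph iff `b = a + 2` and at least one of
situation (1) (two non-adjacent vertices with `a` common neighbours) and situation (4)
(two adjacent vertices with `b` common neighbours) does not occur. -/
theorem deza_complement_iff {V : Type*} [Fintype V] (G : SimpleGraph V) (n k b a : ℕ)
    (h : IsDeza G n k b a) (hnsrg : ¬ ∃ l m : ℕ, IsSRGNat G n k l m) :
    (∃ k' b' a' : ℕ, IsDeza Gᶜ n k' b' a') ↔
      (b = a + 2 ∧
        (¬ (∃ u v : V, u ≠ v ∧ ¬ G.Adj u v ∧ cc G u v = a) ∨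
         ¬ (∃ u v : V, G.Adj u v ∧ cc G u v = b))) := by
  obtain ⟨hab, hbk, hkn, hcard, hreg, hall, ⟨u1, v1, hne1, hc1⟩, ⟨u2, v2, hne2, hc2⟩⟩ := h
  -- a < b, since otherwise G is strongly regular
  have hlt : a < b := by
    rcases lt_or_eq_of_le hab with hlt | heq
    · exact hlt
    · exfalso
      apply hnsrg
      refine ⟨a, a, hcard, hreg, fun u v huv => ?_, fun u v hne _ => ?_⟩
      · rcases hall u v huv.ne with h' | h' <;> omega
      · rcases hall u v hne with h' | h' <;> omega
  -- the two key formulas with regularity plugged in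
  have keyA : ∀ u v : V, G.Adj u v → cc Gᶜ u v + 2 * k = n + cc G u v := by
    intro u v huv
    have hk := key_adj G huv
    have hu := hreg u
    have hv := hreg v
    rw [Nat.card_coe_set_eq] at hu hv
    omega
  have keyN : ∀ u v : V, u ≠ v → ¬ G.Adj u v → cc Gᶜ u v + 2 * k + 2 = n + cc G u v := by
    intro u v hne huv
    have hk := key_nonadj G hne huv
    have hu := hreg u
    have hv := hreg v
    rw [Nat.card_coe_set_eq] at hu hv
    omega
  -- an adjacent pair exists
  have hadjpair : ∃ u v : V, G.Adj u v := by
    have hk1 := hreg u1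
    rw [Nat.card_coe_set_eq] at hk1
    have hne : (G.neighborSet u1).Nonempty := by
      apply Set.nonempty_of_ncard_ne_zero
      omega
    obtain ⟨w, hw⟩ := hne
    exact ⟨u1, w, hw⟩
  -- a non-adjacent pair exists
  have hnonadjpair : ∃ u v : V, u ≠ v ∧ ¬ G.Adj u v := by
    by_contra hc
    push_neg at hc
    have hcc : ∀ u v : V, u ≠ v → cc G u v + 2 = n := by
      intro u v huv
      have hset : G.commonNeighbors u v = ({u, v} : Set V)ᶜ := by
        ext w
        simp only [commonNeighbors, Set.mem_inter_iff, mem_neighborSet,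
          Set.mem_compl_iff, Set.mem_insert_iff, Set.mem_singleton_iff]
        constructor
        · rintro ⟨h1, h2⟩
          push_neg
          exact ⟨fun e => G.irrefl (e ▸ h1), fun e => G.irrefl (e ▸ h2)⟩
        · intro hw
          push_neg at hw
          exact ⟨hc u w (fun e => hw.1 e.symm), hc v w (fun e => hw.2 e.symm)⟩
      have h1 := Set.ncard_add_ncard_compl ({u, v} : Set V)
      rw [Set.ncard_pair huv] at h1
      rw [cc_eq, hset]
      omega
    have h1 := hcc u1 v1 hne1
    have h2 := hcc u2 v2 hne2
    omega
  -- dichotomy from non-strong-regularity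
  have hdich :
      ((∃ u v : V, u ≠ v ∧ ¬ G.Adj u v ∧ cc G u v = a) ∧
        (∃ u v : V, u ≠ v ∧ ¬ G.Adj u v ∧ cc G u v = b)) ∨
      ((∃ u v : V, G.Adj u v ∧ cc G u v = a) ∧
        (∃ u v : V, G.Adj u v ∧ cc G u v = b)) := by
    by_contra hcon
    rw [not_or] at hcon
    obtain ⟨h12, h34⟩ := hcon
    apply hnsrg
    have hladj : ∃ l, ∀ u v : V, G.Adj u v → cc G u v = l := by
      by_cases hP3 : ∃ u v : V, G.Adj u v ∧ cc G u v = a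
      · refine ⟨a, fun u v huv => ?_⟩
        rcases hall u v huv.ne with h' | h'
        · exact h'
        · exact absurd ⟨hP3, ⟨u, v, huv, h'⟩⟩ h34
      · refine ⟨b, fun u v huv => ?_⟩
        rcases hall u v huv.ne with h' | h'
        · exact absurd ⟨u, v, huv, h'⟩ hP3
        · exact h'
    have hmnon : ∃ m, ∀ u v : V, u ≠ v → ¬ G.Adj u v → cc G u v = m := by
      by_cases hP1 : ∃ u v : V, u ≠ v ∧ ¬ G.Adj u v ∧ cc G u v = a
      · refine ⟨a, fun u v hne hna => ?_⟩
        rcases hall u v hne with h' | h'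
        · exact h'
        · exact absurd ⟨hP1, ⟨u, v, hne, hna, h'⟩⟩ h12
      · refine ⟨b, fun u v hne hna => ?_⟩
        rcases hall u v hne with h' | h'
        · exact absurd ⟨u, v, hne, hna, h'⟩ hP1
        · exact h'
    obtain ⟨l, hl⟩ := hladj
    obtain ⟨m, hm⟩ := hmnon
    exact ⟨l, m, hcard, hreg, hl, hm⟩
  constructor
  · -- forward direction
    rintro ⟨k', b', a', ha'b', hb'k', hk'n, hcard', hreg', hall', -, -⟩
    rcases hdich with ⟨⟨x1, y1, hne1', hna1, hcc1⟩, ⟨x2, y2, hne2', hna2, hcc2⟩⟩ |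
        ⟨⟨x3, y3, hadj3, hcc3⟩, ⟨x4, y4, hadj4, hcc4⟩⟩
    · -- situations (1) and (2) occur
      have e1 := keyN x1 y1 hne1' hna1
      have e2 := keyN x2 y2 hne2' hna2
      have m1 := hall' x1 y1 hne1'
      have m2 := hall' x2 y2 hne2'
      have hnP4 : ¬ (∃ u v : V, G.Adj u v ∧ cc G u v = b) := by
        rintro ⟨x4, y4, hadj4, hcc4⟩
        have e4 := keyA x4 y4 hadj4
        have m4 := hall' x4 y4 hadj4.ne
        omega
      refine ⟨?_, Or.inr hnP4⟩
      obtain ⟨x, y, hadj⟩ := hadjpair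
      have hxy : cc G x y = a := by
        rcases hall x y hadj.ne with h' | h'
        · exact h'
        · exact absurd ⟨x, y, hadj, h'⟩ hnP4
      have e3 := keyA x y hadj
      have m3 := hall' x y hadj.ne
      omega
    · -- situations (3) and (4) occur
      have e3 := keyA x3 y3 hadj3
      have e4 := keyA x4 y4 hadj4
      have m3 := hall' x3 y3 hadj3.ne
      have m4 := hall' x4 y4 hadj4.ne
      have hnP1 : ¬ (∃ u v : V, u ≠ v ∧ ¬ G.Adj u v ∧ cc G u v = a) := by
        rintro ⟨x1, y1, hne1', hna1, hcc1⟩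
        have e1 := keyN x1 y1 hne1' hna1
        have m1 := hall' x1 y1 hne1'
        omega
      refine ⟨?_, Or.inl hnP1⟩
      obtain ⟨x, y, hne, hna⟩ := hnonadjpair
      have hxy : cc G x y = b := by
        rcases hall x y hne with h' | h'
        · exact absurd ⟨x, y, hne, hna, h'⟩ hnP1
        · exact h'
      have e2 := keyN x y hne hna
      have m2 := hall' x y hne
      omega
  · -- backward direction
    rintro ⟨hb2, hor⟩
    subst hb2
    -- the complement is regular of valency n - (k+1)
    have hk'all : ∀ v : V, Nat.card (Gᶜ.neighborSet v) + (k + 1) = n := by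
      intro v
      have hd := compl_deg G v
      have hv := hreg v
      rw [Nat.card_coe_set_eq] at hv
      omega
    have hreg' : IsRegularNat Gᶜ (n - (k + 1)) := by
      intro v
      have := hk'all v
      omega
    rcases hor with hnP1 | hnP4
    · -- no non-adjacent pair with `a` common neighbours; then (3) and (4) occur
      have h34 : (∃ u v : V, G.Adj u v ∧ cc G u v = a) ∧
          (∃ u v : V, G.Adj u v ∧ cc G u v = a + 2) := by
        rcases hdich with ⟨hP1, -⟩ | h'
        · exact absurd hP1 hnP1
        · exact h'
      obtain ⟨⟨x3, y3, hadj3, hcc3⟩, ⟨x4, y4, hadj4, hcc4⟩⟩ := h34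
      have e3 := keyA x3 y3 hadj3
      have e4 := keyA x4 y4 hadj4
      refine ⟨n - (k + 1), cc Gᶜ x4 y4, cc Gᶜ x3 y3, ?_, ?_, ?_, hcard, hreg', ?_,
        ⟨x3, y3, hadj3.ne, rfl⟩, ⟨x4, y4, hadj4.ne, rfl⟩⟩
      · omega
      · have hle := cc_le_deg Gᶜ x4 y4
        rw [hreg' x4] at hle
        exact hle
      · omega
      · intro u v hne
        by_cases hadj : G.Adj u v
        · have e := keyA u v hadj
          rcases hall u v hne with h' | h'
          · left; omega
          · right; omega
        · have e := keyN u v hne hadj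
          rcases hall u v hne with h' | h'
          · exact absurd ⟨u, v, hne, hadj, h'⟩ hnP1
          · left; omega
    · -- no adjacent pair with `b` common neighbours; then (1) and (2) occur
      have h12 : (∃ u v : V, u ≠ v ∧ ¬ G.Adj u v ∧ cc G u v = a) ∧
          (∃ u v : V, u ≠ v ∧ ¬ G.Adj u v ∧ cc G u v = a + 2) := by
        rcases hdich with h' | ⟨-, hP4⟩
        · exact h'
        · exact absurd hP4 hnP4
      obtain ⟨⟨x1, y1, hne1', hna1, hcc1⟩, ⟨x2, y2, hne2', hna2, hcc2⟩⟩ := h12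
      have e1 := keyN x1 y1 hne1' hna1
      have e2 := keyN x2 y2 hne2' hna2
      refine ⟨n - (k + 1), cc Gᶜ x2 y2, cc Gᶜ x1 y1, ?_, ?_, ?_, hcard, hreg', ?_,
        ⟨x1, y1, hne1', rfl⟩, ⟨x2, y2, hne2', rfl⟩⟩
      · omega
      · have hle := cc_le_deg Gᶜ x2 y2
        rw [hreg' x2] at hle
        exact hle
      · omega
      · intro u v hne
        by_cases hadj : G.Adj u v
        · have e := keyA u v hadj
          rcases hall u v hne with h' | h'
          · right; omega
          · exact absurd ⟨u, v, hadj, h'⟩ hnP4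
        · have e := keyN u v hne hadj
          rcases hall u v hne with h' | h'
          · left; omega
          · right; omega
end

section
/- Let Δ be a Deza graph with parameters (n,k,b,a), a < b, adjacency matrix M, and children with adjacency matrices A and B (so that M² = aA + bB + kI and A+B+I = J). If θ₁ = k, θ₂, …, θₙ are the eigenvalues of M, then the eigenvalues of A are α = (b(n-1)-k(k-1))/(b-a) together with (k - b - θᵢ²)/(b-a) for i = 2,…,n, and the eigenvalues of B are β = (a(n-1)-k(k-1))/(a-b) together with (k - a - θᵢ²)/(a-b) for i = 2,…,n. -/
open SimpleGraph

open scoped Classical in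
/-- The adjacency matrix of `G` over `ℝ`. -/
noncomputable def adjMat {V : Type*} (G : SimpleGraph V) : Matrix V V ℝ :=
  Matrix.of fun i j => if G.Adj i j then (1 : ℝ) else 0

lemma adjMat_mulVec_one {V : Type*} [Fintype V] [DecidableEq V] (G : SimpleGraph V) (k : ℕ)
    (hreg : IsRegularNat G k) :
    (adjMat G).mulVec (fun _ => 1) = fun _ => (k : ℝ) := by
  classical
  funext v
  have := hreg v
  rw [Nat.card_eq_fintype_card] at this
  simp only [adjMat, Matrix.mulVec, dotProduct, Matrix.of_apply, mul_one]
  rw [Finset.sum_ite, Finset.sum_const, Finset.sum_const]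
  simp only [smul_eq_mul, mul_one, mul_zero, add_zero, nsmul_eq_mul]
  rw [← this]
  norm_cast
  rw [Fintype.card_subtype]
  rfl


/-- Spectra of Deza children: the all-ones vector is an eigenvector of `A`
(resp. `B`) with eigenvalue `α = (b(n-1)-k(k-1))/(b-a)` (resp. `β = (a(n-1)-k(k-1))/(a-b)`),
and every eigenvector of `M` with eigenvalue `θ` orthogonal to the all-ones vector is an
eigenvector of `A` (resp. `B`) with eigenvalue `(k-b-θ²)/(b-a)` (resp. `(k-a-θ²)/(a-b)`). -/
theorem deza_children_spectra {V : Type*} [Fintype V] [DecidableEq V] (G : SimpleGraph V)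
    (n k b a : ℕ) (h : IsDeza G n k b a) (hab : a < b)
    (A B : Matrix V V ℝ)
    (hA01 : ∀ i j, A i j = 0 ∨ A i j = 1) (hB01 : ∀ i j, B i j = 0 ∨ B i j = 1)
    (hsum : A + B + 1 = Matrix.of (fun _ _ => (1 : ℝ)))
    (hM : (adjMat G) ^ 2 = (a : ℝ) • A + (b : ℝ) • B + (k : ℝ) • (1 : Matrix V V ℝ)) :
    (A.mulVec (fun _ => 1) =
        (((b : ℝ) * ((n : ℝ) - 1) - (k : ℝ) * ((k : ℝ) - 1)) / ((b : ℝ) - (a : ℝ))) •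
          (fun _ => (1 : ℝ))) ∧
    (B.mulVec (fun _ => 1) =
        (((a : ℝ) * ((n : ℝ) - 1) - (k : ℝ) * ((k : ℝ) - 1)) / ((a : ℝ) - (b : ℝ))) •
          (fun _ => (1 : ℝ))) ∧
    (∀ (θ : ℝ) (x : V → ℝ), x ≠ 0 → (adjMat G).mulVec x = θ • x → (∑ i, x i = 0) →
      A.mulVec x = (((k : ℝ) - (b : ℝ) - θ ^ 2) / ((b : ℝ) - (a : ℝ))) • x ∧
      B.mulVec x = (((k : ℝ) - (a : ℝ) - θ ^ 2) / ((a : ℝ) - (b : ℝ))) • x) := by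
  obtain ⟨hab', hbk, hkn, hcard, hreg, -, -, -⟩ := h
  have habR : (a : ℝ) < b := by exact_mod_cast hab
  have hba : (b : ℝ) - a ≠ 0 := by linarith
  have hab0 : (a : ℝ) - b ≠ 0 := by linarith
  -- M·1 = k·1
  have hM1 : (adjMat G).mulVec (fun _ => 1) = fun _ => (k : ℝ) :=
    adjMat_mulVec_one G k hreg
  -- M²·1 = k²·1
  have hM2 : ((adjMat G) ^ 2).mulVec (fun _ => 1) = fun _ => (k : ℝ) * k := by
    rw [pow_two, ← Matrix.mulVec_mulVec, hM1]
    have : (fun _ : V => (k : ℝ)) = (k : ℝ) • (fun _ : V => (1 : ℝ)) := by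
      funext v; simp
    rw [this, Matrix.mulVec_smul, hM1]
    funext v; simp [mul_comm]
  -- J·1 = n·1
  have hcardV : (Fintype.card V : ℝ) = n := by
    rw [← hcard, Nat.card_eq_fintype_card]
  have hJ1 : (Matrix.of (fun _ _ => (1 : ℝ)) : Matrix V V ℝ).mulVec (fun _ => 1)
      = fun _ => (n : ℝ) := by
    funext v
    simp [Matrix.mulVec, dotProduct, hcardV]
  -- equations from hsum and hM applied to 1
  have eqsum : ∀ v, A.mulVec (fun _ => 1) v + B.mulVec (fun _ => 1) v + 1 = (n : ℝ) := by
    intro v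
    have := congrFun (congrArg (fun M => Matrix.mulVec M (fun _ => (1:ℝ))) hsum) v
    simpa [Matrix.add_mulVec, Matrix.one_mulVec, hJ1] using this
  have eqM : ∀ v, (a : ℝ) * A.mulVec (fun _ => 1) v + (b : ℝ) * B.mulVec (fun _ => 1) v
      + (k : ℝ) = (k : ℝ) * k := by
    intro v
    have := congrFun (congrArg (fun M => Matrix.mulVec M (fun _ => (1:ℝ))) hM) v
    simpa [hM2, Matrix.add_mulVec, Matrix.smul_mulVec, Matrix.one_mulVec, smul_eq_mul]
      using this.symm
  refine ⟨?_, ?_, ?_⟩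
  · funext v
    have h1 := eqsum v; have h2 := eqM v
    simp only [Pi.smul_apply, smul_eq_mul, mul_one]
    rw [eq_div_iff hba]
    linear_combination (b : ℝ) * h1 - h2
  · funext v
    have h1 := eqsum v; have h2 := eqM v
    simp only [Pi.smul_apply, smul_eq_mul, mul_one]
    rw [eq_div_iff hab0]
    linear_combination (a : ℝ) * h1 - h2
  · intro θ x hx hθ hsum0
    have hJx : (Matrix.of (fun _ _ => (1 : ℝ)) : Matrix V V ℝ).mulVec x = 0 := by
      funext v
      simp [Matrix.mulVec, dotProduct, hsum0]
    have hM2x : ((adjMat G) ^ 2).mulVec x = (θ ^ 2) • x := by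
      rw [pow_two, ← Matrix.mulVec_mulVec, hθ, Matrix.mulVec_smul, hθ, smul_smul, ← pow_two]
    have eqsumx : ∀ v, A.mulVec x v + B.mulVec x v + x v = 0 := by
      intro v
      have := congrFun (congrArg (fun M => Matrix.mulVec M x) hsum) v
      simpa [hJx, Matrix.add_mulVec, Matrix.one_mulVec] using this
    have eqMx : ∀ v, (a : ℝ) * A.mulVec x v + (b : ℝ) * B.mulVec x v + (k : ℝ) * x v
        = θ ^ 2 * x v := by
      intro v
      have := congrFun (congrArg (fun M => Matrix.mulVec M x) hM) v
      simpa [hM2x, Matrix.add_mulVec, Matrix.smul_mulVec, Matrix.one_mulVec, smul_eq_mul]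
        using this.symm
    constructor
    · funext v
      have h1 := eqsumx v; have h2 := eqMx v
      simp only [Pi.smul_apply, smul_eq_mul]
      rw [div_mul_eq_mul_div, eq_div_iff hba]
      linear_combination (b : ℝ) * h1 - h2
    · funext v
      have h1 := eqsumx v; have h2 := eqMx v
      simp only [Pi.smul_apply, smul_eq_mul]
      rw [div_mul_eq_mul_div, eq_div_iff hab0]
      linear_combination (a : ℝ) * h1 - h2
end

section
/- For any integer d ≥ 3, the complement of the d-dimensional hypercube H(d,2) is a Deza graph with parameters (2^d, 2^d - d - 1, 2^d - 2d, 2^d - 2d - 2), and its d+1 distinct eigenvalues are 2^d - d - 1 and -1 - (d - 2i) for 1 ≤ i ≤ d. -/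
open SimpleGraph

/-- The `d`-dimensional hypercube `H(d,2)`: vertices are `{0,1}^d`, two vertices adjacent
iff they differ in exactly one coordinate. -/
def hypercube (d : ℕ) : SimpleGraph (Fin d → ZMod 2) where
  Adj x y := (Finset.univ.filter fun i => x i ≠ y i).card = 1
  symm := by
    constructor
    intro x y h
    have : (Finset.univ.filter fun i => y i ≠ x i) =
        (Finset.univ.filter fun i => x i ≠ y i) := by
      apply Finset.filter_congr
      intro i _
      exact ne_comm
    rw [this]
    exact h
  loopless := by
    constructor
    intro x h
    simp at h

/-!
Two distinct vertices of the hypercube have two common neighbours when they are at Hamming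
distance 2 and none otherwise. Complementing a `k`-regular graph on `n` vertices turns `c` common
neighbours of `u ≠ v` into `n - 2k - 2 + c`, plus 2 when `u` and `v` were adjacent.

The Walsh functions `x ↦ (-1) ^ (S ⬝ᵥ x)` are eigenvectors of the hypercube with eigenvalue
`d - 2|S|`, hence of its complement `J - I - A` with eigenvalue `2^d - d - 1` for `S = 0` and
`-1 - (d - 2|S|)` otherwise. They are orthogonal, so they span, and a symmetric matrix has no
eigenvalues beyond those of a spanning family of eigenvectors.
-/

open Matrix

section Hamming

lemma add_single_one_injective {ι : Type*} [DecidableEq ι] (x : ι → ZMod 2) :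
    Function.Injective fun i => x + Pi.single i 1 := by
  intro i j h
  by_contra hij
  simpa [Pi.single_apply, hij] using congrFun h i

variable {ι : Type*} [Fintype ι]

lemma ncard_setOf_ne_eq_hammingDist {β : ι → Type*} [∀ i, DecidableEq (β i)]
    (x y : ∀ i, β i) :
    {i | x i ≠ y i}.ncard = hammingDist x y := by
  simp [hammingDist, ← Set.ncard_coe_finset]

variable [DecidableEq ι]

lemma hammingDist_add_single_one (x y : ι → ZMod 2) (i : ι) :
    hammingDist (x + Pi.single i 1) y =
      if x i = y i then hammingDist x y + 1 else hammingDist x y - 1 := by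
  have hflip : ∀ a b : ZMod 2, a + 1 ≠ b ↔ a = b := by decide
  split_ifs with h
  · have : Finset.univ.filter (fun j => (x + Pi.single i 1 : ι → ZMod 2) j ≠ y j) =
        insert i (Finset.univ.filter fun j => x j ≠ y j) := by
      ext j
      rcases eq_or_ne j i with rfl | hj <;> simp [*]
    rw [hammingDist, this, Finset.card_insert_of_notMem (by simp [h]), hammingDist]
  · have : Finset.univ.filter (fun j => (x + Pi.single i 1 : ι → ZMod 2) j ≠ y j) =
        (Finset.univ.filter fun j => x j ≠ y j).erase i := by
      ext j
      rcases eq_or_ne j i with rfl | hj <;> simp [*]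
    rw [hammingDist, this, Finset.card_erase_of_mem (by simp [h]), hammingDist]

lemma hammingDist_eq_one_iff {x y : ι → ZMod 2} :
    hammingDist x y = 1 ↔ ∃ i, y = x + Pi.single i 1 := by
  constructor
  · intro h
    obtain ⟨i, hi⟩ := Function.ne_iff.mp (hammingDist_ne_zero.mp (h ▸ one_ne_zero))
    refine ⟨i, (hammingDist_eq_zero.mp ?_).symm⟩
    rw [hammingDist_add_single_one, if_neg hi, h]
  · rintro ⟨i, rfl⟩
    rw [hammingDist_comm, hammingDist_add_single_one, if_pos rfl, hammingDist_self]

end Hamming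

section Complement

variable {V : Type*} [Finite V] {G : SimpleGraph V}

lemma IsRegularNat.compl {k : ℕ} (hG : IsRegularNat G k) :
    IsRegularNat Gᶜ (Nat.card V - k - 1) := by
  intro v
  rw [Nat.card_coe_set_eq, neighborSet_compl, Set.ncard_sdiff_singleton_of_mem (by simp),
    Set.ncard_compl, ← Nat.card_coe_set_eq, hG v]

/-- Common neighbours in `Gᶜ` are the vertices outside both closed neighbourhoods; these
intersect in the common neighbours in `G`, plus `u` and `v` when they are adjacent. -/
lemma IsRegularNat.cc_compl_add [DecidableRel G.Adj] {k : ℕ} (hG : IsRegularNat G k) {u v : V}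
    (huv : u ≠ v) :
    cc Gᶜ u v + 2 * k + 2 = Nat.card V + cc G u v + if G.Adj u v then 2 else 0 := by
  set A := insert u (G.neighborSet u)
  set B := insert v (G.neighborSet v)
  have hA : A.ncard = k + 1 := by
    rw [Set.ncard_insert_of_notMem (by simp), ← Nat.card_coe_set_eq, hG]
  have hB : B.ncard = k + 1 := by
    rw [Set.ncard_insert_of_notMem (by simp), ← Nat.card_coe_set_eq, hG]
  have hcompl : Gᶜ.commonNeighbors u v = (A ∪ B)ᶜ := by
    ext w
    simp only [A, B, mem_commonNeighbors, compl_adj, Set.mem_compl_iff, Set.mem_union,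
      Set.mem_insert_iff, mem_neighborSet]
    grind
  have hinter : (A ∩ B).ncard = cc G u v + if G.Adj u v then 2 else 0 := by
    rw [cc, Nat.card_coe_set_eq]
    split_ifs with hadj
    · have : A ∩ B = insert u (insert v (G.commonNeighbors u v)) := by
        ext w
        simp only [A, B, mem_commonNeighbors, Set.mem_inter_iff, Set.mem_insert_iff,
          mem_neighborSet]
        grind [G.adj_symm hadj]
      rw [this, Set.ncard_insert_of_notMem (by simp [huv, mem_commonNeighbors]),
        Set.ncard_insert_of_notMem (by simp [mem_commonNeighbors])]
    · have : A ∩ B = G.commonNeighbors u v := by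
        ext w
        simp only [A, B, mem_commonNeighbors, Set.mem_inter_iff, Set.mem_insert_iff,
          mem_neighborSet]
        grind [G.adj_symm]
      rw [this, add_zero]
  rw [cc, Nat.card_coe_set_eq, hcompl, Set.ncard_compl]
  have := Set.ncard_union_add_ncard_inter A B
  have := Set.ncard_le_card (A ∪ B)
  split_ifs at hinter ⊢ <;> omega

end Complement

section Hypercube

variable {d : ℕ}

lemma nat_card_hypercube_vertices : Nat.card (Fin d → ZMod 2) = 2 ^ d := by
  simp

lemma hypercube_adj {x y : Fin d → ZMod 2} : (hypercube d).Adj x y ↔ hammingDist x y = 1 :=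
  Iff.rfl

lemma hypercube_neighborSet (x : Fin d → ZMod 2) :
    (hypercube d).neighborSet x = Set.range fun i => x + Pi.single i 1 := by
  ext y
  rw [mem_neighborSet, hypercube_adj, hammingDist_eq_one_iff, Set.mem_range]
  exact exists_congr fun i => eq_comm

lemma isRegularNat_hypercube : IsRegularNat (hypercube d) d := fun x => by
  rw [hypercube_neighborSet, Nat.card_range_of_injective (add_single_one_injective x),
    Nat.card_eq_fintype_card, Fintype.card_fin]

lemma cc_hypercube {x y : Fin d → ZMod 2} (hxy : x ≠ y) :
    cc (hypercube d) x y = if hammingDist x y = 2 then 2 else 0 := by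
  have hpos := hammingDist_pos.mpr hxy
  have hcommon : (hypercube d).commonNeighbors x y =
      (fun i => x + Pi.single i 1) '' {i | x i ≠ y i ∧ hammingDist x y = 2} := by
    rw [commonNeighbors, hypercube_neighborSet, ← Set.image_preimage_eq_range_inter]
    congr 1
    ext i
    simp only [Set.mem_preimage, mem_neighborSet, hypercube_adj, hammingDist_comm y,
      hammingDist_add_single_one, Set.mem_ofPred_eq]
    split_ifs with h <;> simp [h]; omega
  rw [cc, hcommon, Nat.card_image_of_injective (add_single_one_injective x)]
  split_ifs with h
  · simp only [h, and_true]
    rw [Nat.card_coe_set_eq, ncard_setOf_ne_eq_hammingDist, h]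
  · simp [h]

lemma cc_compl_hypercube {x y : Fin d → ZMod 2} (hxy : x ≠ y) :
    cc (hypercube d)ᶜ x y + 2 * d + 2 = 2 ^ d + if hammingDist x y ≤ 2 then 2 else 0 := by
  classical
  have h := isRegularNat_hypercube.cc_compl_add hxy
  have hpos := hammingDist_pos.mpr hxy
  rw [cc_hypercube hxy, hypercube_adj, nat_card_hypercube_vertices] at h
  split_ifs at h ⊢ <;> omega

theorem isDeza_compl_hypercube (hd : 3 ≤ d) :
    IsDeza (hypercube d)ᶜ (2 ^ d) (2 ^ d - d - 1) (2 ^ d - 2 * d) (2 ^ d - 2 * d - 2) := by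
  have hregular := (isRegularNat_hypercube (d := d)).compl
  rw [nat_card_hypercube_vertices] at hregular
  set allOnes : Fin d → ZMod 2 := fun _ => 1
  set e₀ : Fin d → ZMod 2 := Pi.single ⟨0, by omega⟩ 1
  have hfar : hammingDist 0 allOnes = d := by
    simp [allOnes, hammingDist_zero_left, hammingNorm]
  have hnear : hammingDist 0 e₀ = 1 := hammingDist_eq_one_iff.mpr ⟨_, (zero_add _).symm⟩
  have hpow := Nat.one_le_two_pow (n := d)
  refine ⟨by omega, by omega, by omega, nat_card_hypercube_vertices, hregular,
    fun x y hxy => ?_, ⟨0, allOnes, hammingDist_pos.mp (by omega), ?_⟩,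
    ⟨0, e₀, hammingDist_pos.mp (by omega), ?_⟩⟩
  · have := cc_compl_hypercube hxy
    split_ifs at this <;> omega
  · have := cc_compl_hypercube (hammingDist_pos.mp (by omega : 0 < hammingDist 0 allOnes))
    rw [hfar, if_neg (by omega)] at this
    omega
  · have := cc_compl_hypercube (hammingDist_pos.mp (by omega : 0 < hammingDist 0 e₀))
    rw [hnear, if_pos (by omega)] at this
    omega

end Hypercube

theorem Matrix.IsSymm.setOf_eigenvalue_eq_range {R V ι : Type*} [CommRing R] [IsDomain R]
    [Fintype V] {M : Matrix V V R} (hM : M.IsSymm) {f : ι → V → R} {θ : ι → R}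
    (hf : ∀ i, M *ᵥ f i = θ i • f i) (hf0 : ∀ i, f i ≠ 0)
    (hspan : ∀ x, (∀ i, f i ⬝ᵥ x = 0) → x = 0) :
    {μ | ∃ x, x ≠ 0 ∧ M *ᵥ x = μ • x} = Set.range θ := by
  ext μ
  constructor
  · rintro ⟨x, hx, hμ⟩
    by_contra hθ
    refine hx (hspan x fun i => ?_)
    have h : θ i * (f i ⬝ᵥ x) = μ * (f i ⬝ᵥ x) :=
      calc θ i * (f i ⬝ᵥ x) = (M *ᵥ f i) ⬝ᵥ x := by rw [hf, smul_dotProduct, smul_eq_mul]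
        _ = f i ⬝ᵥ (M *ᵥ x) := by rw [dotProduct_mulVec, ← mulVec_transpose, hM.eq]
        _ = μ * (f i ⬝ᵥ x) := by rw [hμ, dotProduct_smul, smul_eq_mul]
    exact (mul_eq_mul_right_iff.mp h).resolve_left fun h => hθ ⟨i, h⟩
  · rintro ⟨i, rfl⟩
    exact ⟨f i, hf0 i, hf i⟩

lemma neg_one_pow_val_add {R : Type*} [Ring R] (a b : ZMod 2) :
    (-1 : R) ^ (a + b).val = (-1) ^ a.val * (-1) ^ b.val := by
  rw [ZMod.val_add, ← neg_one_pow_eq_pow_mod_two, pow_add]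

section Walsh

variable {ι : Type*} [Fintype ι]

noncomputable def walsh (S x : ι → ZMod 2) : ℝ := (-1) ^ (S ⬝ᵥ x).val

lemma walsh_comm (S x : ι → ZMod 2) : walsh S x = walsh x S := by
  rw [walsh, walsh, dotProduct_comm]

lemma walsh_add (S x y : ι → ZMod 2) : walsh S (x + y) = walsh S x * walsh S y := by
  rw [walsh, dotProduct_add, neg_one_pow_val_add]
  rfl

@[simp]
lemma walsh_zero_left (x : ι → ZMod 2) : walsh 0 x = 1 := by
  simp [walsh]

lemma walsh_ne_zero (S : ι → ZMod 2) : walsh S ≠ 0 :=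
  fun h => by simpa [walsh] using congrFun h 0

lemma sum_neg_one_pow_val (S : ι → ZMod 2) :
    ∑ i, (-1 : ℝ) ^ (S i).val = Fintype.card ι - 2 * hammingNorm S := by
  have hterm : ∀ a : ZMod 2, (-1 : ℝ) ^ a.val = 1 - 2 * if a ≠ 0 then 1 else 0 := by
    intro a
    rcases (by decide : ∀ a : ZMod 2, a = 0 ∨ a = 1) a with rfl | rfl <;>
      norm_num [ZMod.val_one]
  simp_rw [hterm, Finset.sum_sub_distrib, ← Finset.mul_sum, Finset.sum_boole]
  simp [hammingNorm]

variable [DecidableEq ι]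

lemma walsh_single_one (S : ι → ZMod 2) (i : ι) :
    walsh S (Pi.single i 1) = (-1) ^ (S i).val := by
  rw [walsh, dotProduct_single, mul_one]

lemma sum_walsh (S : ι → ZMod 2) :
    ∑ x, walsh S x = if S = 0 then 2 ^ Fintype.card ι else 0 := by
  split_ifs with hS
  · simp [hS]
  · obtain ⟨i, hi⟩ := Function.ne_iff.mp hS
    have hSi : S i = 1 := by
      have h01 : ∀ a : ZMod 2, a ≠ 0 → a = 1 := by decide
      exact h01 _ hi
    -- translating by `Pi.single i 1` negates every term
    have h : ∑ x, walsh S x = -∑ x, walsh S x :=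
      calc ∑ x, walsh S x = ∑ x, walsh S (x + Pi.single i 1) :=
            (Fintype.sum_equiv (Equiv.addRight (Pi.single i 1)) _ _ fun _ => rfl).symm
        _ = -∑ x, walsh S x := by
            simp [walsh_add, walsh_single_one, hSi, ZMod.val_one]
    linarith

lemma sum_walsh_mul_walsh (x y : ι → ZMod 2) :
    ∑ S, walsh S x * walsh S y = if x = y then 2 ^ Fintype.card ι else 0 := by
  have hneg : -y = y := funext fun i => ZMod.neg_eq_self_mod_two (y i)
  simp_rw [← walsh_add, walsh_comm _ (x + y), sum_walsh, add_eq_zero_iff_eq_neg, hneg]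

lemma eq_zero_of_forall_walsh_dotProduct_eq_zero {f : (ι → ZMod 2) → ℝ}
    (h : ∀ S, walsh S ⬝ᵥ f = 0) : f = 0 := by
  funext y
  have hinv : ∑ S, walsh S y * (walsh S ⬝ᵥ f) = 2 ^ Fintype.card ι * f y := by
    simp_rw [dotProduct, Finset.mul_sum, ← mul_assoc]
    rw [Finset.sum_comm]
    simp_rw [← Finset.sum_mul, sum_walsh_mul_walsh]
    simp
  simpa [h] using hinv.symm

lemma exists_hammingNorm_eq {n : ℕ} (hn : n ≤ Fintype.card ι) :
    ∃ S : ι → ZMod 2, hammingNorm S = n := by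
  obtain ⟨s, -, hs⟩ := Finset.exists_subset_card_eq (s := Finset.univ) hn
  exact ⟨fun j => if j ∈ s then 1 else 0, by simp [hammingNorm, hs]⟩

end Walsh

section AdjacencyMatrix

variable {V : Type*}

lemma adjMat_eq_adjMatrix (G : SimpleGraph V) [DecidableRel G.Adj] :
    adjMat G = G.adjMatrix ℝ := by
  ext
  simp [adjMat, adjMatrix_apply]

lemma isSymm_adjMat (G : SimpleGraph V) : (adjMat G).IsSymm := by
  classical
  rw [adjMat_eq_adjMatrix]
  exact G.isSymm_adjMatrix

variable [Fintype V]

lemma adjMat_compl_mulVec (G : SimpleGraph V) (f : V → ℝ) :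
    adjMat Gᶜ *ᵥ f = (fun _ => ∑ y, f y) - f - adjMat G *ᵥ f := by
  classical
  have hcompl : Gᶜ.adjMatrix ℝ = of 1 - 1 - G.adjMatrix ℝ := by
    rw [← compl_adjMatrix_eq_adjMatrix_compl (G := G) (α := ℝ),
      ← one_add_adjMatrix_add_compl_adjMatrix_eq_of_one (G := G) (α := ℝ)]
    abel
  rw [adjMat_eq_adjMatrix, adjMat_eq_adjMatrix, hcompl, sub_mulVec, sub_mulVec, one_mulVec]
  ext x
  simp [mulVec, dotProduct]

end AdjacencyMatrix

section HypercubeSpectrum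

variable {d : ℕ}

noncomputable def complHypercubeEigenvalue (d : ℕ) (S : Fin d → ZMod 2) : ℝ :=
  (if S = 0 then (2 : ℝ) ^ d else 0) - 1 - (d - 2 * hammingNorm S)

lemma adjMat_hypercube_mulVec_apply (f : (Fin d → ZMod 2) → ℝ) (x : Fin d → ZMod 2) :
    (adjMat (hypercube d) *ᵥ f) x = ∑ i, f (x + Pi.single i 1) := by
  classical
  have hnbrs : (hypercube d).neighborFinset x = Finset.univ.image fun i => x + Pi.single i 1 := by
    ext y
    rw [mem_neighborFinset, ← mem_neighborSet, hypercube_neighborSet]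
    simp
  rw [adjMat_eq_adjMatrix, adjMatrix_mulVec_apply, hnbrs,
    Finset.sum_image fun i _ j _ h => add_single_one_injective x h]

lemma adjMat_hypercube_mulVec_walsh (S : Fin d → ZMod 2) :
    adjMat (hypercube d) *ᵥ walsh S = ((d : ℝ) - 2 * hammingNorm S) • walsh S := by
  ext x
  simp_rw [adjMat_hypercube_mulVec_apply, walsh_add, walsh_single_one, ← Finset.mul_sum,
    sum_neg_one_pow_val, Fintype.card_fin, Pi.smul_apply, smul_eq_mul, mul_comm]

lemma adjMat_compl_hypercube_mulVec_walsh (S : Fin d → ZMod 2) :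
    adjMat (hypercube d)ᶜ *ᵥ walsh S = complHypercubeEigenvalue d S • walsh S := by
  rw [adjMat_compl_mulVec, adjMat_hypercube_mulVec_walsh, complHypercubeEigenvalue]
  ext x
  split_ifs with hS
  · subst hS
    simp
  · simp [sum_walsh, hS]
    ring

lemma setOf_eigenvalue_adjMat_compl_hypercube :
    {μ : ℝ | ∃ x, x ≠ 0 ∧ adjMat (hypercube d)ᶜ *ᵥ x = μ • x} =
      Set.range (complHypercubeEigenvalue d) :=
  (isSymm_adjMat _).setOf_eigenvalue_eq_range adjMat_compl_hypercube_mulVec_walsh walsh_ne_zero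
    fun _ => eq_zero_of_forall_walsh_dotProduct_eq_zero

lemma range_eigenvalue_compl_hypercube :
    Set.range (complHypercubeEigenvalue d) =
      {μ : ℝ | μ = 2 ^ d - (d : ℝ) - 1 ∨
          ∃ i : ℕ, 1 ≤ i ∧ i ≤ d ∧ μ = -1 - ((d : ℝ) - 2 * (i : ℝ))} := by
  ext μ
  constructor
  · rintro ⟨S, rfl⟩
    by_cases hS : S = 0
    · left
      simp [complHypercubeEigenvalue, hS]
      ring
    · right
      refine ⟨hammingNorm S, hammingNorm_pos_iff.mpr hS, ?_, ?_⟩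
      · simpa using hammingNorm_le_card_fintype (x := S)
      · simp [complHypercubeEigenvalue, hS]
  · rintro (rfl | ⟨i, hi, hid, rfl⟩)
    · exact ⟨0, by simp [complHypercubeEigenvalue]; ring⟩
    · obtain ⟨S, hS⟩ := exists_hammingNorm_eq (ι := Fin d) (n := i) (by simpa using hid)
      have hS0 : S ≠ 0 := hammingNorm_ne_zero_iff.mp (by omega)
      exact ⟨S, by simp [complHypercubeEigenvalue, hS0, hS]⟩

lemma two_mul_lt_two_pow {n : ℕ} (hn : 3 ≤ n) : 2 * n < 2 ^ n := by
  induction n, hn using Nat.le_induction with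
  | base => norm_num
  | succ n _ ih => rw [pow_succ]; omega

lemma ncard_eigenvalues_compl_hypercube (hd : 3 ≤ d) :
    ({μ : ℝ | μ = 2 ^ d - (d : ℝ) - 1 ∨
        ∃ i : ℕ, 1 ≤ i ∧ i ≤ d ∧ μ = -1 - ((d : ℝ) - 2 * (i : ℝ))}).ncard =
      d + 1 := by
  set f : ℕ → ℝ := fun i => -1 - ((d : ℝ) - 2 * i)
  have hset : {μ : ℝ | μ = 2 ^ d - (d : ℝ) - 1 ∨
      ∃ i : ℕ, 1 ≤ i ∧ i ≤ d ∧ μ = -1 - ((d : ℝ) - 2 * (i : ℝ))} =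
        insert (2 ^ d - (d : ℝ) - 1) (f '' Set.Icc 1 d) := by
    ext μ
    simp [f, eq_comm (a := μ), and_assoc]
  have hf : Function.Injective f := fun i j h => by simpa [f] using h
  -- the largest eigenvalue would collide with `f i` only if `2 ^ d = 2 * i ≤ 2 * d`
  have hlarge : 2 ^ d - (d : ℝ) - 1 ∉ f '' Set.Icc 1 d := by
    rintro ⟨i, ⟨-, hid⟩, h⟩
    have hlt : (2 * d : ℝ) < 2 ^ d := by exact_mod_cast two_mul_lt_two_pow hd
    have hid' : (i : ℝ) ≤ d := by exact_mod_cast hid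
    simp only [f] at h
    linarith
  rw [hset, Set.ncard_insert_of_notMem hlarge, Set.ncard_image_of_injective _ hf,
    Set.ncard_eq_toFinset_card', Set.toFinset_Icc, Nat.card_Icc]
  omega

end HypercubeSpectrum

/-- For `d ≥ 3`, the complement of the hypercube `H(d,2)` is a Deza graph
with parameters `(2^d, 2^d - d - 1, 2^d - 2d, 2^d - 2d - 2)` whose `d+1` distinct
eigenvalues are `2^d - d - 1` and `-1 - (d - 2i)` for `1 ≤ i ≤ d`. -/
theorem hypercube_complement_deza (d : ℕ) (hd : 3 ≤ d) :
    IsDeza (hypercube d)ᶜ (2 ^ d) (2 ^ d - d - 1) (2 ^ d - 2 * d) (2 ^ d - 2 * d - 2) ∧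
    {μ : ℝ | ∃ x : (Fin d → ZMod 2) → ℝ, x ≠ 0 ∧ (adjMat (hypercube d)ᶜ).mulVec x = μ • x}
      = {μ : ℝ | μ = 2 ^ d - (d : ℝ) - 1 ∨
          ∃ i : ℕ, 1 ≤ i ∧ i ≤ d ∧ μ = -1 - ((d : ℝ) - 2 * (i : ℝ))} ∧
    ({μ : ℝ | μ = 2 ^ d - (d : ℝ) - 1 ∨
        ∃ i : ℕ, 1 ≤ i ∧ i ≤ d ∧ μ = -1 - ((d : ℝ) - 2 * (i : ℝ))}).ncard = d + 1 :=
  ⟨isDeza_compl_hypercube hd,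
    setOf_eigenvalue_adjMat_compl_hypercube.trans range_eigenvalue_compl_hypercube,
    ncard_eigenvalues_compl_hypercube hd⟩
end
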